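/- arXiv:2102.03528 — 2 statements merged into one kernel-verified Lean document; each statement's English description precedes it below -/
import Mathlib

section
/- Let x ∈ ℕ^6 (not necessarily sorted) with even coordinate sum, and suppose the parity vector of x is not among (0,0,1,1,1,1), (1,1,0,0,1,1), (1,1,1,1,0,0), (0,0,0,0,0,0) after sorting. If all six coordinates of x are odd, then decreasing the two smallest coordinates by 1 yields a vector whose parity vector (after sorting) has exactly 4 odd coordinates matching one of the patterns with a valid move; in particular, there exists a move x → x' (decreasing two positive coordinates by one each) such that x' has parity vector in the given set up to reordering. -/
/-- The set of parity patterns characterizing P-positions. -/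
def parityPatterns : Set (Fin 6 → ZMod 2) :=
  {![0,0,1,1,1,1], ![1,1,0,0,1,1], ![1,1,1,1,0,0], ![0,0,0,0,0,0]}

lemma odd_cast_zmod2 {n : ℕ} (h : Odd n) : (n : ZMod 2) = 1 := by
  obtain ⟨k, rfl⟩ := h
  push_cast
  ring_nf
  simp [show ((2:ZMod 2) = 0) from rfl]

lemma odd_pred_cast_zmod2 {n : ℕ} (h : Odd n) : ((n - 1 : ℕ) : ZMod 2) = 0 := by
  obtain ⟨k, rfl⟩ := h
  have : 2 * k + 1 - 1 = 2 * k := by omega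
  rw [this]
  push_cast
  simp [show ((2:ZMod 2) = 0) from rfl]

/-- If all six coordinates of `x ∈ ℕ⁶` are odd (so its sum is even and its
parity vector, even after sorting, is outside the pattern set), then there is a
move `x → x'` decreasing two positive coordinates by one each such that, up to
reordering, the parity vector of `x'` lies in the pattern set. -/
theorem all_odd_has_move_to_P (x : Fin 6 → ℕ)
    (hsum : Even (∑ t, x t))
    (hodd : ∀ t, Odd (x t))
    (hnotP : ∀ σ : Equiv.Perm (Fin 6),
      (fun t => ((x (σ t) : ZMod 2))) ∉ parityPatterns) :
    ∃ i j : Fin 6, i ≠ j ∧ 0 < x i ∧ 0 < x j ∧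
      ∃ x' : Fin 6 → ℕ,
        (∀ t, x' t = if t = i ∨ t = j then x t - 1 else x t) ∧
        ∃ σ : Equiv.Perm (Fin 6),
          (fun t => ((x' (σ t) : ZMod 2))) ∈ parityPatterns := by
  refine ⟨0, 1, by decide, (hodd 0).pos, (hodd 1).pos,
    fun t => if t = 0 ∨ t = 1 then x t - 1 else x t, fun t => rfl, 1, ?_⟩
  have key : (fun t => (((if (1 : Equiv.Perm (Fin 6)) t = 0 ∨ (1 : Equiv.Perm (Fin 6)) t = 1 then x ((1 : Equiv.Perm (Fin 6)) t) - 1 else x ((1 : Equiv.Perm (Fin 6)) t) : ℕ)) : ZMod 2))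
      = ![0,0,1,1,1,1] := by
    funext t
    simp only [Equiv.Perm.coe_one, id]
    fin_cases t <;>
      simp [odd_pred_cast_zmod2 (hodd _), odd_cast_zmod2 (hodd _)] <;> decide
  rw [show (fun t => (((fun t => if t = 0 ∨ t = 1 then x t - 1 else x t) ((1 : Equiv.Perm (Fin 6)) t) : ℕ) : ZMod 2)) = ![0,0,1,1,1,1] from key]
  left; rfl
end

section
/- Let P₁ ⊆ ℕ^6 be the set of nondecreasing vectors x with odd sum defined by (E(x) ∧ T(x) > 0) ∨ (K(x) ∧ F(x) ∧ T(x) = 0) ∨ (K(x) ∧ T(x) < 0), where E(x): x_2 ≡ x_1, x_4 ≡ x_3, x_5 ≡ x_4 + x_1 (mod 2); F(x): x_4 ≡ x_3 (mod 2); K(x): Σx_i ≡ 1 (mod 4); r(x) = x_1 + x_4 - x_5; s(x) = x_1 - x_2 + x_3 - x_4 - x_5 + x_6; u(x) = s(x) - 2 r(x) + 1; T(x) = min(s(x), u(x)). Then for each of the vectors y ∈ {(0,0,1,1,1,1), (1,1,1,1,2,2), (0,0,0,2,2,4), (0,2,2,2,2,4)}, and for all nondecreasing x with odd sum, x ∈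 P₁ if and only if x + y ∈ P₁. -/
def condE (x : Fin 6 → ℕ) : Prop :=
  x 1 % 2 = x 0 % 2 ∧ x 3 % 2 = x 2 % 2 ∧ x 4 % 2 = (x 3 + x 0) % 2

def condF (x : Fin 6 → ℕ) : Prop := x 3 % 2 = x 2 % 2

def condK (x : Fin 6 → ℕ) : Prop := (∑ t, x t) % 4 = 1

def rfun (x : Fin 6 → ℕ) : ℤ := (x 0 : ℤ) + x 3 - x 4

def sfun (x : Fin 6 → ℕ) : ℤ := (x 0 : ℤ) - x 1 + x 2 - x 3 - x 4 + x 5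

def ufun (x : Fin 6 → ℕ) : ℤ := sfun x - 2 * rfun x + 1

def Tfun (x : Fin 6 → ℕ) : ℤ := min (sfun x) (ufun x)

/-- Membership in `P₁` (the P-positions of Nim¹_{6,=2}[1]). -/
def inP1 (x : Fin 6 → ℕ) : Prop :=
  (condE x ∧ 0 < Tfun x) ∨ (condK x ∧ condF x ∧ Tfun x = 0) ∨
    (condK x ∧ Tfun x < 0)

/-- Each of the four listed shift vectors preserves membership in `P₁`
for nondecreasing vectors with odd sum. -/
theorem P1_shifts (y : Fin 6 → ℕ)
    (hy : y ∈ ({![0,0,1,1,1,1], ![1,1,1,1,2,2], ![0,0,0,2,2,4], ![0,2,2,2,2,4]} :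
      Set (Fin 6 → ℕ)))
    (x : Fin 6 → ℕ) (hmono : Monotone x) (hsum : Odd (∑ t, x t)) :
    inP1 x ↔ inP1 (x + y) := by
  have five : ∀ (a b c d e f : ℕ), (![a,b,c,d,e,f] : Fin 6 → ℕ) 5 = f := fun _ _ _ _ _ _ => rfl
  have key : ∀ x' : Fin 6 → ℕ, (condE (x + x') ↔ condE x) →
      (condF (x + x') ↔ condF x) → (condK (x + x') ↔ condK x) →
      sfun (x + x') = sfun x → rfun (x + x') = rfun x →
      (inP1 x ↔ inP1 (x + x')) := by
    intro x' hE hF hK hs hr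
    have hT : Tfun (x + x') = Tfun x := by
      rw [Tfun, Tfun, hs, ufun, ufun, hs, hr]
    rw [inP1, inP1, hT, hE, hF, hK]
  simp only [Set.mem_insert_iff, Set.mem_singleton_iff] at hy
  rcases hy with rfl | rfl | rfl | rfl <;>
    refine key _ ?_ ?_ ?_ ?_ ?_ <;>
      simp [condE, condF, condK, sfun, rfun, Fin.sum_univ_six, five] <;>
      omega
end
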